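/- arXiv:1210.4421 — 10 statements merged into one kernel-verified Lean document; each statement's English description precedes it below -/
import Mathlib

section
/- Let S be a right generalized inverse semigroup, let e ∈ S be an idempotent, and let a, b ∈ S satisfy a·e = a and b·e = b. If V(a) ∩ V(b) ≠ ∅, then a = b. -/
/-- `t` is a (von Neumann) inverse of `s`. -/
def IsInvOf {S : Type*} [Semigroup S] (t s : S) : Prop :=
  s * t * s = s ∧ t * s * t = t

/-- `e` is an idempotent. -/
def IsIdem {S : Type*} [Semigroup S] (e : S) : Prop := e * e = e

/-- A right generalized inverse semigroup: every element is regular, the product of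
idempotents is idempotent, and idempotents satisfy the right normality law `e*f*g = f*e*g`. -/
structure IsRGIS (S : Type*) [Semigroup S] : Prop where
  regular : ∀ s : S, ∃ t, IsInvOf t s
  idem_mul : ∀ e f : S, IsIdem e → IsIdem f → IsIdem (e * f)
  right_normal : ∀ e f g : S, IsIdem e → IsIdem f → IsIdem g → e * f * g = f * e * g

/-- A right ∗-semigroup structure: axioms (S1)-(S4). -/
structure IsRightStar (S : Type*) [Semigroup S] (star : S → S) : Prop where
  s1 : ∀ s : S, star (star s) = s
  s2 : ∀ s : S, IsInvOf (star s) s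
  s3 : ∀ s t : S, star (s * t) = star t * star (s * t * star t)
  s4 : ∀ e : S, IsIdem e → star e = e

/-- An inverse semigroup: `inv s` is an inverse of `s`, and inverses are unique. -/
structure IsInverseSemigroup (S : Type*) [Semigroup S] (inv : S → S) : Prop where
  inv_spec : ∀ s : S, IsInvOf (inv s) s
  inv_unique : ∀ s t : S, IsInvOf t s → t = inv s

/-- The relation γ : `a γ b` iff `V(a) ∩ V(b) ≠ ∅`. -/
def GammaRel {S : Type*} [Semigroup S] (a b : S) : Prop :=
  ∃ t, IsInvOf t a ∧ IsInvOf t b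

/-- The natural partial order on a regular semigroup. -/
def NatLe {S : Type*} [Semigroup S] (a b : S) : Prop :=
  ∃ e f : S, IsIdem e ∧ IsIdem f ∧ a = e * b ∧ a = b * f

/-- Green's L relation. -/
def GreenL {S : Type*} [Semigroup S] (a b : S) : Prop :=
  a = b ∨ ∃ x y : S, a = x * b ∧ b = y * a

/-- An étale homomorphism: for every idempotent `e` of `T`, `θ` restricts to a bijection
from `T·e` onto `S·θ(e)`. -/
def IsEtaleHom {T S : Type*} [Semigroup T] [Semigroup S] (θ : T → S) : Prop :=
  ∀ e : T, IsIdem e →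
    (∀ a b : T, a * e = a → b * e = b → θ a = θ b → a = b) ∧
    (∀ s : S, s * θ e = s → ∃ a : T, a * e = a ∧ θ a = s)

/-!
If `t ∈ V(a) ∩ V(b)`, then `ta, tb, at, bt` are idempotents. Right normality applied to
`tb · ta · e`, with `ae = a` and `be = b`, shows that `ta` and `tb` commute, whence
`atb = a` and `bta = b`. Hence the idempotents `at` and `bt` satisfy `at·bt = at` and
`bt·at = bt`, and right normality forces `at = bt`; so `a = atb = btb = b`.
-/

section

variable {S : Type*} [Semigroup S]

namespace IsInvOf

variable {s t : S}

theorem isIdem_inv_mul (h : IsInvOf t s) : IsIdem (t * s) := by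
  rw [IsIdem, ← mul_assoc, h.2]

theorem isIdem_mul_inv (h : IsInvOf t s) : IsIdem (s * t) := by
  rw [IsIdem, ← mul_assoc, h.1]

end IsInvOf

namespace IsRGIS

theorem eq_of_isIdem_of_mul_eq_left (h : IsRGIS S) {x y : S} (hx : IsIdem x) (hy : IsIdem y)
    (hxy : x * y = x) (hyx : y * x = y) : x = y :=
  calc x = x * y * y := by rw [mul_assoc, hy, hxy]
    _ = y * x * y := h.right_normal x y y hx hy hy
    _ = y := by rw [hyx, hy]

theorem inv_mul_comm_of_mul_eq_self (h : IsRGIS S) {e a b t : S} (he : IsIdem e)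
    (ha : a * e = a) (hb : b * e = b) (hta : IsInvOf t a) (htb : IsInvOf t b) :
    t * b * (t * a) = t * a * (t * b) := by
  have := h.right_normal (t * b) (t * a) e htb.isIdem_inv_mul hta.isIdem_inv_mul he
  simpa only [mul_assoc, ha, hb] using this

theorem mul_inv_mul_eq_left (h : IsRGIS S) {e a b t : S} (he : IsIdem e)
    (ha : a * e = a) (hb : b * e = b) (hta : IsInvOf t a) (htb : IsInvOf t b) :
    a * t * b = a :=
  calc a * t * b = a * t * a * (t * b) := by rw [hta.1, mul_assoc]
    _ = a * (t * a * (t * b)) := by simp only [mul_assoc]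
    _ = a * (t * b * (t * a)) := by rw [h.inv_mul_comm_of_mul_eq_self he ha hb hta htb]
    _ = a * (t * b * t) * a := by simp only [mul_assoc]
    _ = a := by rw [htb.2, hta.1]

end IsRGIS

end

/-- Lemma 2.1(1): In a right generalized inverse semigroup, if `a, b ∈ Se` and
`V(a) ∩ V(b) ≠ ∅` then `a = b`. -/
theorem rgis_cancel_of_gamma {S : Type*} [Semigroup S] (h : IsRGIS S)
    (e a b : S) (he : IsIdem e) (ha : a * e = a) (hb : b * e = b)
    (hab : GammaRel a b) : a = b := by
  obtain ⟨t, hta, htb⟩ := hab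
  have hatb : a * t * b = a := h.mul_inv_mul_eq_left he ha hb hta htb
  have hbta : b * t * a = b := h.mul_inv_mul_eq_left he hb ha htb hta
  have hat_bt : a * t = b * t := by
    refine h.eq_of_isIdem_of_mul_eq_left hta.isIdem_mul_inv htb.isIdem_mul_inv ?_ ?_
    · rw [← mul_assoc, hatb]
    · rw [← mul_assoc, hbta]
  calc a = a * t * b := hatb.symm
    _ = b * t * b := by rw [hat_bt]
    _ = b := htb.1
end

section
/- Let S be a right generalized inverse semigroup and a ∈ S. If V(a) ∩ V(a·a) ≠ ∅, then a = a·a. (Thus the relation γ, defined by x γ y iff V(x) ∩ V(y) ≠ ∅, is idempotent pure.) -/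
theorem rgis_gamma_idempotent_pure_general {S : Type*} [Semigroup S]
    (a : S) (ha : GammaRel a (a * a)) : a = a * a := by
  obtain ⟨t, ⟨hat, -⟩, ⟨-, htaa⟩⟩ := ha
  calc a = a * t * a := hat.symm
    _ = a * (t * (a * a) * t) * a := by rw [htaa]
    _ = (a * t * a) * (a * t * a) := by simp only [mul_assoc]
    _ = a * a := by rw [hat]

/-- Lemma 2.1(2): In a right generalized inverse semigroup, if `a γ a²` then `a = a²`;
thus γ is idempotent pure. -/
theorem rgis_gamma_idempotent_pure {S : Type*} [Semigroup S] (h : IsRGIS S)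
    (a : S) (ha : GammaRel a (a * a)) : a = a * a :=
  rgis_gamma_idempotent_pure_general a ha
end

section
/- Let S be a right generalized inverse semigroup and let a, e ∈ S. Suppose V(e) ∩ V(e·e) ≠ ∅ (i.e. the γ-class of e is an idempotent of S/γ) and V(a·e) ∩ V(a) ≠ ∅ (i.e. γ(a)·γ(e) = γ(a)). Then there exists b ∈ S with b·e = b and V(b) ∩ V(a) ≠ ∅. -/
theorem IsIdem.of_gammaRel_mul_self {S : Type*} [Semigroup S] {s : S}
    (hs : GammaRel s (s * s)) : IsIdem s := by
  obtain ⟨u, ⟨hsus, -⟩, -, hussu⟩ := hs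
  calc s * s = (s * u * s) * (s * u * s) := by rw [hsus]
    _ = s * (u * (s * s) * u) * s := by simp only [mul_assoc]
    _ = s * u * s := by rw [hussu]
    _ = s := hsus

theorem rgis_gamma_restrict_general {S : Type*} [Semigroup S]
    (a e : S) (he : GammaRel e (e * e)) (hae : GammaRel (a * e) a) :
    ∃ b : S, b * e = b ∧ GammaRel b a := by
  have he_idem : IsIdem e := IsIdem.of_gammaRel_mul_self he
  exact ⟨a * e, by rw [mul_assoc, he_idem], hae⟩

/-- Lemma 2.1(3): If `γ(a)γ(e) = γ(a)` where `γ(e)` is an idempotent, then there exists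
`b ∈ Se` with `γ(b) = γ(a)`. -/
theorem rgis_gamma_restrict {S : Type*} [Semigroup S] (h : IsRGIS S)
    (a e : S) (he : GammaRel e (e * e)) (hae : GammaRel (a * e) a) :
    ∃ b : S, b * e = b ∧ GammaRel b a :=
  rgis_gamma_restrict_general a e he hae
end

section
/- Let S be a right generalized inverse semigroup equipped with a unary operation s ↦ s∗ satisfying (S1) (s∗)∗ = s, (S2) s∗ ∈ V(s), and (S3) (s·t)∗ = t∗·(s·t·t∗)∗. Then (S4) holds automatically: every idempotent e of S satisfies e∗ = e. -/
theorem IsInvOf.isIdem_mul_inv_s4 {S : Type*} [Semigroup S] {s t : S} (h : IsInvOf t s) :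
    IsIdem (s * t) := by
  rw [IsIdem, ← mul_assoc, h.1]

theorem IsInvOf.isIdem_inv_mul_s4 {S : Type*} [Semigroup S] {s t : S} (h : IsInvOf t s) :
    IsIdem (t * s) := by
  rw [IsIdem, ← mul_assoc, h.2]

namespace IsRGIS

variable {S : Type*} [Semigroup S] (hS : IsRGIS S) {e t : S}
include hS

/-- Right normality applied to `e`, `t e`, `e t` collapses the two sides to `e t` and `t`. -/
theorem mul_inv_eq_of_isIdem (he : IsIdem e) (ht : IsInvOf t e) : e * t = t :=
  calc e * t = e * (t * e) * (e * t) := by rw [← mul_assoc e t e, ht.1, ← mul_assoc, he]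
    _ = t * e * e * (e * t) := hS.right_normal _ _ _ he ht.isIdem_inv_mul_s4 ht.isIdem_mul_inv_s4
    _ = t := by rw [mul_assoc t e e, he, ← mul_assoc, mul_assoc t e e, he, ht.2]

theorem inv_mul_eq_of_isIdem (he : IsIdem e) (ht : IsInvOf t e) : t * e = e := by
  rw [← hS.mul_inv_eq_of_isIdem he ht, ht.1]

end IsRGIS

theorem star_mul_star_self {S : Type*} [Semigroup S] {star : S → S}
    (s1 : ∀ s : S, star (star s) = s)
    (s2 : ∀ s : S, IsInvOf (star s) s)
    (s3 : ∀ s t : S, star (s * t) = star t * star (s * t * star t)) (s : S) :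
    star (s * star s) = s * star s := by
  rw [s3, s1, (s2 s).1]

/-- Lemma 2.1(5): If a unary operation on a right generalized inverse semigroup
satisfies (S1), (S2) and (S3), then (S4) holds automatically. -/
theorem rgis_star_s4 {S : Type*} [Semigroup S] (h : IsRGIS S) (star : S → S)
    (s1 : ∀ s : S, star (star s) = s)
    (s2 : ∀ s : S, IsInvOf (star s) s)
    (s3 : ∀ s t : S, star (s * t) = star t * star (s * t * star t)) :
    ∀ e : S, IsIdem e → star e = e := by
  intro e he
  have hfix : star (star e * e) = star e * e := by
    simpa only [s1] using star_mul_star_self s1 s2 s3 (star e)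
  calc star e = star (star e * e) := by rw [h.inv_mul_eq_of_isIdem he (s2 e)]
    _ = star e * e := hfix
    _ = e := h.inv_mul_eq_of_isIdem he (s2 e)
end

section
/- Let S be a right generalized inverse ∗-semigroup and a, b ∈ S. Then a ≤ b in the natural partial order if and only if a∗ ≤ b∗. -/
/-!
If `a = e * b` with `e` idempotent, axioms (S3) and (S4) give `a∗ = b∗ * g` for the idempotent
`g = e * (b * b∗) = a * b∗`; hence `a∗ = a∗ * g = (a∗ * a) * b∗`, so `a∗ ≤ b∗`. The converse
follows by applying this to `a∗, b∗` and using (S1).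
-/

section

variable {S : Type*} [Semigroup S]

theorem IsInvOf.isIdem_mul {s t : S} (h : IsInvOf t s) : IsIdem (s * t) := by
  change s * t * (s * t) = s * t
  rw [← mul_assoc, h.1]

theorem IsInvOf.isIdem_mul_rev {s t : S} (h : IsInvOf t s) : IsIdem (t * s) := by
  change t * s * (t * s) = t * s
  rw [← mul_assoc, h.2]

variable {star : S → S}

theorem IsRightStar.star_idem_mul (hstar : IsRightStar S star) {e : S} (b : S)
    (he : IsIdem (e * (b * star b))) : star (e * b) = star b * (e * (b * star b)) := by
  rw [hstar.s3, mul_assoc e b, hstar.s4 _ he]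

theorem IsRightStar.natLe_star_idem_mul (hstar : IsRightStar S star)
    (idem_mul : ∀ e f : S, IsIdem e → IsIdem f → IsIdem (e * f)) {e : S} (he : IsIdem e)
    (b : S) : NatLe (star (e * b)) (star b) := by
  set a := e * b
  set g := e * (b * star b)
  have hg : IsIdem g := idem_mul _ _ he (hstar.s2 b).isIdem_mul
  have ha_star : star a = star b * g := hstar.star_idem_mul b hg
  have hg_eq : a * star b = g := mul_assoc e b (star b)
  refine ⟨star a * a, g, (hstar.s2 a).isIdem_mul_rev, hg, ?_, ha_star⟩
  calc star a = star b * g * g := by rw [mul_assoc, hg, ha_star]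
    _ = star a * a * star b := by rw [← ha_star, ← hg_eq, ← mul_assoc]

theorem IsRightStar.natLe_star (hstar : IsRightStar S star)
    (idem_mul : ∀ e f : S, IsIdem e → IsIdem f → IsIdem (e * f)) {a b : S}
    (hab : NatLe a b) : NatLe (star a) (star b) := by
  obtain ⟨e, -, he, -, rfl, -⟩ := hab
  exact hstar.natLe_star_idem_mul idem_mul he b

end

/-- Lemma 2.2(1): In a right generalized inverse ∗-semigroup,
`a ≤ b` if and only if `a∗ ≤ b∗`. -/
theorem rgis_star_natLe_iff {S : Type*} [Semigroup S] (h : IsRGIS S)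
    (star : S → S) (hstar : IsRightStar S star) (a b : S) :
    NatLe a b ↔ NatLe (star a) (star b) := by
  refine ⟨hstar.natLe_star h.idem_mul, fun hab => ?_⟩
  simpa only [hstar.s1] using hstar.natLe_star h.idem_mul hab
end

section
/- Let S be a right generalized inverse ∗-semigroup and a, b ∈ S. Then the following are equivalent: (i) a ≤ b in the natural partial order; (ii) a = a·a∗·b; (iii) a∗ = a∗·a·b∗. -/
/-!
In a right ∗-semigroup `a a∗` and `a∗ a` are idempotents, and axiom (S3) says that
`(s t)∗ = t∗ (s t t∗)` whenever `s t t∗` is idempotent. Under (ii) the element `a b∗ = a a∗ · b b∗`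
is idempotent, so (S3) gives `a∗ = b∗ (a b∗)`, from which (iii) follows; dually (iii) makes `a∗ b`
idempotent and gives `a = b (a∗ b)`, which exhibits `a ≤ b`. For (i) ⇒ (ii), writing `a = e b = b f`,
(S3) gives `a∗ = f a∗`, hence `a a∗ = b a∗` is fixed by `e`, and right normality moves `e` past `a a∗`.
-/

section RightStar

variable {S : Type*} [Semigroup S] {star : S → S}

theorem IsRightStar.mul_star_mul (hstar : IsRightStar S star) (s : S) : s * star s * s = s :=
  (hstar.s2 s).1

theorem IsRightStar.star_mul_star (hstar : IsRightStar S star) (s : S) :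
    star s * s * star s = star s :=
  (hstar.s2 s).2

theorem IsRightStar.isIdem_mul_star (hstar : IsRightStar S star) (s : S) :
    IsIdem (s * star s) := by
  rw [IsIdem, ← mul_assoc, hstar.mul_star_mul]

theorem IsRightStar.isIdem_star_mul (hstar : IsRightStar S star) (s : S) :
    IsIdem (star s * s) := by
  rw [IsIdem, ← mul_assoc, hstar.star_mul_star]

theorem IsRightStar.star_mul_of_isIdem (hstar : IsRightStar S star) {s t : S}
    (h : IsIdem (s * t * star t)) : star (s * t) = star t * (s * t * star t) := by
  rw [hstar.s3, hstar.s4 _ h]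

theorem IsRightStar.star_mul_isIdem (hstar : IsRightStar S star) (s : S) {f : S}
    (hf : IsIdem f) : star (s * f) = f * star (s * f) := by
  have h := hstar.s3 s f
  rwa [hstar.s4 f hf, mul_assoc s f f, hf] at h

theorem IsRightStar.eq_mul_star_mul_of_natLe (hstar : IsRightStar S star)
    (hN : ∀ e f g : S, IsIdem e → IsIdem f → IsIdem g → e * f * g = f * e * g) {a b : S}
    (hab : NatLe a b) : a = a * star a * b := by
  obtain ⟨e, f, he, hf, hae, haf⟩ := hab
  have hfa : f * star a = star a := by
    rw [haf]
    exact (hstar.star_mul_isIdem b hf).symm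
  have haa : a * star a = b * star a := by
    calc a * star a = b * f * star a := by rw [← haf]
      _ = b * star a := by rw [mul_assoc, hfa]
  have hea : e * (a * star a) = a * star a := by
    rw [haa, ← mul_assoc, ← hae, haa]
  calc a = a * star a * (e * b) := by rw [← hae, hstar.mul_star_mul]
    _ = a * star a * e * (b * star b) * b := by
        rw [mul_assoc _ (b * star b) b, hstar.mul_star_mul, mul_assoc (a * star a)]
    _ = e * (a * star a) * (b * star b) * b := by
        rw [hN _ _ _ (hstar.isIdem_mul_star a) he (hstar.isIdem_mul_star b)]
    _ = a * star a * b := by rw [hea, mul_assoc _ (b * star b) b, hstar.mul_star_mul]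

theorem IsRightStar.star_eq_of_eq_mul_star_mul (hstar : IsRightStar S star)
    (hE : ∀ e f : S, IsIdem e → IsIdem f → IsIdem (e * f)) {a b : S}
    (hab : a = a * star a * b) : star a = star a * a * star b := by
  have hidem : IsIdem (a * star b) := by
    have hfac : a * star b = a * star a * (b * star b) := by rw [← mul_assoc, ← hab]
    rw [hfac]
    exact hE _ _ (hstar.isIdem_mul_star a) (hstar.isIdem_mul_star b)
  have ha' : star a = star b * (a * star b) := by
    have h := hstar.star_mul_of_isIdem (s := a * star a) (t := b) (by rwa [← hab])
    rwa [← hab] at h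
  have haa : star a * a = star a * b := by
    nth_rewrite 2 [hab]
    rw [← mul_assoc, ← mul_assoc, hstar.star_mul_star]
  have hbb : star a * (b * star b) = star a := by
    calc star a * (b * star b) = star b * (a * (star b * b * star b)) := by
          nth_rewrite 1 [ha']
          simp only [mul_assoc]
      _ = star a := by rw [hstar.star_mul_star, ← ha']
  rw [haa, mul_assoc, hbb]

theorem IsRightStar.natLe_of_star_eq (hstar : IsRightStar S star)
    (hE : ∀ e f : S, IsIdem e → IsIdem f → IsIdem (e * f)) {a b : S}
    (hab : star a = star a * a * star b) : NatLe a b := by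
  have hidem : IsIdem (star a * b) := by
    have hfac : star a * b = star a * a * (star b * b) := by rw [← mul_assoc, ← hab]
    rw [hfac]
    exact hE _ _ (hstar.isIdem_star_mul a) (hstar.isIdem_star_mul b)
  have hA : a = b * (star a * b) := by
    have h := hstar.star_mul_of_isIdem (s := star a * a) (t := star b)
      (by rwa [← hab, hstar.s1])
    rwa [← hab, hstar.s1, hstar.s1] at h
  have haa : a * star a = a * star b := by
    rw [hab, ← mul_assoc, ← mul_assoc, hstar.mul_star_mul]
  have hbb : a * (star b * b) = a := by
    calc a * (star b * b) = b * (star a * (b * star b * b)) := by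
          nth_rewrite 1 [hA]
          simp only [mul_assoc]
      _ = a := by rw [hstar.mul_star_mul, ← hA]
  refine ⟨a * star a, star a * b, hstar.isIdem_mul_star a, hidem, ?_, hA⟩
  rw [haa, mul_assoc, hbb]

end RightStar

/-- Lemma 2.2(2): In a right generalized inverse ∗-semigroup, `a ≤ b` iff
`a = a·a∗·b` iff `a∗ = a∗·a·b∗`. -/
theorem rgis_star_natLe_char {S : Type*} [Semigroup S] (h : IsRGIS S)
    (star : S → S) (hstar : IsRightStar S star) (a b : S) :
    (NatLe a b ↔ a = a * star a * b) ∧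
    (NatLe a b ↔ star a = star a * a * star b) := by
  have h₁ := hstar.eq_mul_star_mul_of_natLe h.right_normal (a := a) (b := b)
  have h₂ := hstar.star_eq_of_eq_mul_star_mul h.idem_mul (a := a) (b := b)
  have h₃ := hstar.natLe_of_star_eq h.idem_mul (a := a) (b := b)
  exact ⟨⟨h₁, h₃ ∘ h₂⟩, ⟨h₂ ∘ h₁, h₃⟩⟩
end

section
/- Let S be a right generalized inverse semigroup and let s, t ∈ S. If s L t (Green's L-relation) and V(s) ∩ V(t) ≠ ∅, then s = t. (This is the injectivity half of the assertion that the natural map S → S/γ is an L-cover.) -/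
theorem IsInvOf.isIdem_mul_self {S : Type*} [Semigroup S] {u s : S} (hu : IsInvOf u s) :
    IsIdem (s * u) := by
  rw [IsIdem, ← mul_assoc, hu.1]

theorem GreenL.symm {S : Type*} [Semigroup S] {a b : S} (hab : GreenL a b) : GreenL b a := by
  rcases hab with rfl | ⟨x, y, hx, hy⟩
  · exact Or.inl rfl
  · exact Or.inr ⟨y, x, hy, hx⟩

theorem GreenL.mul_mul_eq_of_isInvOf {S : Type*} [Semigroup S] {a b u : S} (hab : GreenL a b)
    (hu : IsInvOf u b) : a * u * b = a := by
  rcases hab with rfl | ⟨x, _, rfl, _⟩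
  · exact hu.1
  · rw [mul_assoc, mul_assoc, ← mul_assoc b, hu.1]

theorem IsRGIS.mul_eq_mul_mul_of_isIdem {S : Type*} [Semigroup S] (h : IsRGIS S) {e f : S}
    (he : IsIdem e) (hf : IsIdem f) : e * f = f * e * f := by
  have := h.right_normal e f f he hf hf
  rwa [mul_assoc e f f, hf] at this

/-- Proposition 2.3(1), injectivity half: in a right generalized inverse semigroup,
if `s L t` and `s γ t` then `s = t`. -/
theorem rgis_L_cover_inj {S : Type*} [Semigroup S] (h : IsRGIS S)
    (s t : S) (hl : GreenL s t) (hg : GammaRel s t) : s = t := by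
  obtain ⟨u, hus, hut⟩ := hg
  have hs : s * u * t = s := hl.mul_mul_eq_of_isInvOf hut
  have ht : t * u * s = t := hl.symm.mul_mul_eq_of_isInvOf hus
  have hnormal := h.mul_eq_mul_mul_of_isIdem hus.isIdem_mul_self hut.isIdem_mul_self
  calc s = s * u * (t * u) * t := by rw [mul_assoc (s * u), hut.1, hs]
    _ = t * u * (s * u) * (t * u) * t := by rw [hnormal]
    _ = t := by rw [mul_assoc _ (t * u), hut.1, mul_assoc (t * u), hs, ht]
end

section
/- Let S be a right generalized inverse semigroup, let e ∈ S be an idempotent, let t ∈ S, and let t′ ∈ V(t). If V(t′·t) ∩ V(e) ≠ ∅, then the element t·e satisfies V(t·e) ∩ V(t) ≠ ∅ (i.e. t·e γ t) and t·e L e. (This is the surjectivity half of the assertion that the natural map S → S/γ is an L-cover.) -/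
/-!
Write `f = t'·t`, an idempotent. If idempotents `a`, `b` of a right generalized inverse semigroup
have a common inverse `x`, right normality gives `b·x·a = a`, hence `b·a = a`. Taking
`(a, b) = (f, e)` and `(e, f)` yields `e·x·f = f` and `f·e = e`; then `x·t'` is an inverse of both `t` and
`t·e`, and `(e·x·t')·(t·e) = e·x·f·e = e`.
-/

def IdemRightNormal (S : Type*) [Semigroup S] : Prop :=
  ∀ e f g : S, IsIdem e → IsIdem f → IsIdem g → e * f * g = f * e * g

section

variable {S : Type*} [Semigroup S] {s t t' x a b e : S}

theorem IsInvOf.isIdem_mul_left (h : IsInvOf t s) : IsIdem (t * s) := by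
  unfold IsIdem
  rw [← mul_assoc, h.2]

theorem IsInvOf.mul_of_isInvOf_mul (ht : IsInvOf t' t) (hx : IsInvOf x (t' * t)) :
    IsInvOf (x * t') t := by
  obtain ⟨htt, -⟩ := ht
  obtain ⟨hfxf, hxfx⟩ := hx
  constructor
  · calc t * (x * t') * t = t * t' * t * x * (t' * t) := by rw [htt]; simp only [mul_assoc]
      _ = t * (t' * t * x * (t' * t)) := by simp only [mul_assoc]
      _ = t := by rw [hfxf, ← mul_assoc, htt]
  · calc x * t' * t * (x * t') = x * (t' * t) * x * t' := by simp only [mul_assoc]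
      _ = x * t' := by rw [hxfx]

theorem IdemRightNormal.mul_inv_mul_eq (hrn : IdemRightNormal S) (ha : IsIdem a) (hb : IsIdem b)
    (hxa : IsInvOf x a) (hxb : IsInvOf x b) : b * x * a = a := by
  have hxa_idem := hxa.isIdem_mul_left
  have hxb_idem := hxb.isIdem_mul_left
  have hbax : b * a * x = a * b * x := calc
    b * a * x = b * a * (x * b) * x := by rw [mul_assoc _ (x * b) x, hxb.2]
    _ = a * b * (x * b) * x := by rw [hrn b a _ hb ha hxb_idem]
    _ = a * b * x := by rw [mul_assoc _ (x * b) x, hxb.2]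
  have haxb : a * x * b = x * a * b := calc
    a * x * b = a * (x * b) * (x * b) := by rw [mul_assoc _ (x * b) (x * b), hxb_idem, mul_assoc]
    _ = x * (b * a * x) * b := by rw [hrn a _ _ ha hxb_idem hxb_idem]; simp only [mul_assoc]
    _ = x * a * (b * x * b) := by rw [hbax]; simp only [mul_assoc]
    _ = x * a * b := by rw [hxb.1]
  calc b * x * a = b * (x * a) * (x * a) := by
        rw [mul_assoc _ (x * a) (x * a), hxa_idem, mul_assoc]
    _ = x * a * b * (x * a) := by rw [hrn b _ _ hb hxa_idem hxa_idem]
    _ = a * (x * b * x) * a := by rw [← haxb]; simp only [mul_assoc]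
    _ = a := by rw [hxb.2, hxa.1]

theorem IdemRightNormal.mul_eq_right_of_isInvOf (hrn : IdemRightNormal S) (ha : IsIdem a)
    (hb : IsIdem b) (hxa : IsInvOf x a) (hxb : IsInvOf x b) : b * a = a := by
  rw [← hrn.mul_inv_mul_eq ha hb hxa hxb, ← mul_assoc, ← mul_assoc, hb]

end

/-- Proposition 2.3(1), surjectivity half: if `e` is idempotent, `t' ∈ V(t)` and
`t'·t γ e`, then `t·e γ t` and `t·e L e`. -/
theorem rgis_L_cover_surj {S : Type*} [Semigroup S] (h : IsRGIS S)
    (e t t' : S) (he : IsIdem e) (ht' : IsInvOf t' t)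
    (hg : GammaRel (t' * t) e) :
    GammaRel (t * e) t ∧ GreenL (t * e) e := by
  obtain ⟨x, hxf, hxe⟩ := hg
  have hrn : IdemRightNormal S := h.right_normal
  have hf := ht'.isIdem_mul_left
  have hexf : e * x * (t' * t) = t' * t := hrn.mul_inv_mul_eq hf he hxf hxe
  have hfe : t' * t * e = e := hrn.mul_eq_right_of_isInvOf he hf hxe hxf
  have htf : t * (t' * t) = t := by rw [← mul_assoc, ht'.1]
  refine ⟨⟨x * t', ⟨?_, ?_⟩, ht'.mul_of_isInvOf_mul hxf⟩, Or.inr ⟨t, e * x * t', rfl, ?_⟩⟩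
  · calc t * e * (x * t') * (t * e) = t * (e * x * (t' * t)) * e := by simp only [mul_assoc]
      _ = t * e := by rw [hexf, htf]
  · calc x * t' * (t * e) * (x * t') = x * (t' * t * e) * x * t' := by simp only [mul_assoc]
      _ = x * t' := by rw [hfe, hxe.2]
  · calc e = t' * t * e := hfe.symm
      _ = e * x * (t' * t) * e := by rw [hexf]
      _ = e * x * t' * (t * e) := by simp only [mul_assoc]
end

section
/- Let (S, X, p) be a left étale action of an inverse semigroup S. Then S∗X, with multiplication (s,x)·(t,y) = (s·t, ((s·t)⁻¹·(s·t))·y) and unary operation (s,x)∗ = (s⁻¹, s·x), is a well-defined right generalized inverse ∗-semigroup: the multiplication and ∗ map S∗X into S∗X, the multiplication is associative, every element is regular with (s,x)∗ ∈ V((s,x)), the operations satisfy (S1)–(S4), the idempotents of S∗X are precisely the elements of the form (p(x), x) for x ∈ X, the product of any two idempotents is idempotent, and idempotents satisfy E·F·G = F·E·G. -/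
section SX

variable {S X : Type*} [Semigroup S]

/-- Membership in `S∗X = {(s,x) : s⁻¹s = p(x)}`. -/
def memSX (inv : S → S) (p : X → S) (a : S × X) : Prop :=
  inv a.1 * a.1 = p a.2

/-- The multiplication `(s,x)(t,y) = (st, ((st)⁻¹(st))·y)` on `S∗X`. -/
def mulSX (inv : S → S) (act : S → X → X) (a b : S × X) : S × X :=
  (a.1 * b.1, act (inv (a.1 * b.1) * (a.1 * b.1)) b.2)

/-- The unary operation `(s,x)∗ = (s⁻¹, s·x)` on `S∗X`. -/
def starSX (inv : S → S) (act : S → X → X) (a : S × X) : S × X :=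
  (inv a.1, act a.1 a.2)

end SX

/-!
Everything reduces to three facts about an inverse semigroup: idempotents commute,
`(st)⁻¹ = t⁻¹s⁻¹`, and `(st)⁻¹(st) · t⁻¹t = (st)⁻¹(st)`. The last one lets the idempotent
`(st)⁻¹(st)` absorb the idempotents acting on the second coordinate, which gives closure,
associativity and (S3). A pair `(s, x) ∈ S∗X` is idempotent exactly when `s` is, and then
`s = s⁻¹s = p(x)`; so products and right normality of idempotents of `S∗X` come from those of `E(S)`.
-/

namespace IsInverseSemigroup

variable {S : Type*} [Semigroup S] {inv : S → S} (hS : IsInverseSemigroup S inv)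
include hS

theorem mul_inv_mul (s : S) : s * inv s * s = s := (hS.inv_spec s).1

theorem inv_mul_inv (s : S) : inv s * s * inv s = inv s := (hS.inv_spec s).2

theorem inv_inv (s : S) : inv (inv s) = s :=
  (hS.inv_unique (inv s) s ⟨hS.inv_mul_inv s, hS.mul_inv_mul s⟩).symm

theorem inv_eq_self_of_isIdem {e : S} (he : IsIdem e) : inv e = e :=
  (hS.inv_unique e e ⟨by rw [he, he], by rw [he, he]⟩).symm

theorem isIdem_inv_mul_self (s : S) : IsIdem (inv s * s) := by
  calc inv s * s * (inv s * s) = inv s * s * inv s * s := by simp only [mul_assoc]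
    _ = inv s * s := by rw [hS.inv_mul_inv]

theorem isIdem_mul {e f : S} (he : IsIdem e) (hf : IsIdem f) : IsIdem (e * f) := by
  set x := inv (e * f)
  have hx : x * (e * f) * x = x := hS.inv_mul_inv (e * f)
  -- `f x e` is another inverse of `e f`, and it is visibly idempotent
  have hfxe : f * x * e = x := by
    refine hS.inv_unique (e * f) _ ⟨?_, ?_⟩
    · calc e * f * (f * x * e) * (e * f) = e * (f * f) * x * (e * e) * f := by
            simp only [mul_assoc]
        _ = e * f * x * (e * f) := by rw [he, hf, mul_assoc (e * f * x)]
        _ = e * f := hS.mul_inv_mul (e * f)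
    · calc f * x * e * (e * f) * (f * x * e) = f * (x * (e * e) * (f * f) * x) * e := by
            simp only [mul_assoc]
        _ = f * (x * (e * f) * x) * e := by rw [he, hf]; simp only [mul_assoc]
        _ = f * x * e := by rw [hx]
  have hxx : IsIdem x := by
    calc x * x = f * x * e * (f * x * e) := by rw [hfxe]
      _ = f * (x * (e * f) * x) * e := by simp only [mul_assoc]
      _ = x := by rw [hx, hfxe]
  have hef : e * f = x :=
    calc e * f = inv x := (hS.inv_inv _).symm
      _ = x := hS.inv_eq_self_of_isIdem hxx
  rw [hef]
  exact hxx

theorem mul_comm_of_isIdem {e f : S} (he : IsIdem e) (hf : IsIdem f) : e * f = f * e := by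
  have hef : IsIdem (e * f) := hS.isIdem_mul he hf
  have hfe : IsIdem (f * e) := hS.isIdem_mul hf he
  -- `f e` is an inverse of the idempotent `e f`, hence equal to it
  have hinv : f * e = inv (e * f) := by
    refine hS.inv_unique (e * f) _ ⟨?_, ?_⟩
    · calc e * f * (f * e) * (e * f) = e * (f * f) * (e * e) * f := by simp only [mul_assoc]
        _ = e * f * (e * f) := by rw [he, hf]; simp only [mul_assoc]
        _ = e * f := hef
    · calc f * e * (e * f) * (f * e) = f * (e * e) * (f * f) * e := by simp only [mul_assoc]
        _ = f * e * (f * e) := by rw [he, hf]; simp only [mul_assoc]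
        _ = f * e := hfe
  rw [hinv, hS.inv_eq_self_of_isIdem hef]

theorem inv_mul_rev (s t : S) : inv (s * t) = inv t * inv s := by
  have hcomm := hS.mul_comm_of_isIdem (hS.isIdem_inv_mul_self (inv t)) (hS.isIdem_inv_mul_self s)
  rw [hS.inv_inv] at hcomm
  refine (hS.inv_unique (s * t) _ ⟨?_, ?_⟩).symm
  · calc s * t * (inv t * inv s) * (s * t) = s * (t * inv t * (inv s * s)) * t := by
          simp only [mul_assoc]
      _ = s * inv s * s * (t * inv t * t) := by rw [hcomm]; simp only [mul_assoc]
      _ = s * t := by rw [hS.mul_inv_mul, hS.mul_inv_mul]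
  · calc inv t * inv s * (s * t) * (inv t * inv s) = inv t * (inv s * s * (t * inv t)) * inv s := by
          simp only [mul_assoc]
      _ = inv t * t * inv t * (inv s * s * inv s) := by rw [← hcomm]; simp only [mul_assoc]
      _ = inv t * inv s := by rw [hS.inv_mul_inv, hS.inv_mul_inv]

theorem inv_mul_self_mul_inv_mul_self_right (s t : S) :
    inv (s * t) * (s * t) * (inv t * t) = inv (s * t) * (s * t) := by
  rw [hS.inv_mul_rev]
  calc inv t * inv s * (s * t) * (inv t * t) = inv t * inv s * s * (t * inv t * t) := by
        simp only [mul_assoc]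
    _ = inv t * inv s * (s * t) := by rw [hS.mul_inv_mul]; simp only [mul_assoc]

end IsInverseSemigroup

theorem memSX.eq_p_of_isIdem_fst {S X : Type*} [Semigroup S] {inv : S → S} {p : X → S}
    (hS : IsInverseSemigroup S inv) {a : S × X} (ha : memSX inv p a) (hs : IsIdem a.1) :
    a = (p a.2, a.2) := by
  obtain ⟨s, x⟩ := a
  change inv s * s = p x at ha
  change s * s = s at hs
  rw [← ha, hS.inv_eq_self_of_isIdem hs, hs]

/-- A left étale action `(S, X, p)` of the inverse semigroup `(S, inv)`; `act s x` is `s · x`. -/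
structure IsLeftEtaleAction {S X : Type*} [Semigroup S] (inv : S → S) (p : X → S)
    (act : S → X → X) : Prop where
  isIdem_p : ∀ x, IsIdem (p x)
  act_mul : ∀ (s t : S) (x : X), act (s * t) x = act s (act t x)
  act_p_self : ∀ x, act (p x) x = x
  p_act : ∀ (s : S) (x : X), p (act s x) = s * p x * inv s

namespace IsLeftEtaleAction

variable {S X : Type*} [Semigroup S] {inv : S → S} {p : X → S} {act : S → X → X}
  (hS : IsInverseSemigroup S inv) (hA : IsLeftEtaleAction inv p act)

include hS hA

theorem act_act_inv_mul_self (s : S) (x : X) : act s (act (inv s * s) x) = act s x := by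
  rw [← hA.act_mul, ← mul_assoc, hS.mul_inv_mul]

theorem memSX_mulSX {a b : S × X} (hb : memSX inv p b) : memSX inv p (mulSX inv act a b) := by
  obtain ⟨s, x⟩ := a
  obtain ⟨t, y⟩ := b
  change inv t * t = p y at hb
  change inv (s * t) * (s * t) = p (act (inv (s * t) * (s * t)) y)
  have hE := hS.isIdem_inv_mul_self (s * t)
  rw [hA.p_act, ← hb, hS.inv_eq_self_of_isIdem hE, hS.inv_mul_self_mul_inv_mul_self_right, hE]

theorem memSX_starSX {a : S × X} (ha : memSX inv p a) : memSX inv p (starSX inv act a) := by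
  obtain ⟨s, x⟩ := a
  change inv s * s = p x at ha
  change inv (inv s) * inv s = p (act s x)
  rw [hA.p_act, ← ha, hS.inv_inv, ← mul_assoc, hS.mul_inv_mul]

theorem mulSX_assoc (a b c : S × X) :
    mulSX inv act (mulSX inv act a b) c = mulSX inv act a (mulSX inv act b c) := by
  obtain ⟨s, _⟩ := a
  obtain ⟨t, _⟩ := b
  obtain ⟨u, z⟩ := c
  simp only [mulSX, mul_assoc, ← hA.act_mul, hS.inv_mul_self_mul_inv_mul_self_right s (t * u)]

theorem starSX_starSX {a : S × X} (ha : memSX inv p a) :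
    starSX inv act (starSX inv act a) = a := by
  obtain ⟨s, x⟩ := a
  change inv s * s = p x at ha
  change (inv (inv s), act (inv s) (act s x)) = (s, x)
  rw [hS.inv_inv, ← hA.act_mul, ha, hA.act_p_self]

theorem mulSX_mulSX_starSX_self {a : S × X} (ha : memSX inv p a) :
    mulSX inv act (mulSX inv act a (starSX inv act a)) a = a := by
  obtain ⟨s, x⟩ := a
  change inv s * s = p x at ha
  change (s * inv s * s, act (inv (s * inv s * s) * (s * inv s * s)) x) = (s, x)
  rw [hS.mul_inv_mul, ha, hA.act_p_self]

theorem mulSX_mulSX_self_starSX {a : S × X} :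
    mulSX inv act (mulSX inv act (starSX inv act a) a) (starSX inv act a) = starSX inv act a := by
  obtain ⟨s, x⟩ := a
  change (inv s * s * inv s, act (inv (inv s * s * inv s) * (inv s * s * inv s)) (act s x)) =
    (inv s, act s x)
  rw [hS.inv_mul_inv, hS.inv_inv, ← hA.act_mul, hS.mul_inv_mul]

theorem starSX_mulSX (a b : S × X) :
    starSX inv act (mulSX inv act a b) =
      mulSX inv act (starSX inv act b)
        (starSX inv act (mulSX inv act (mulSX inv act a b) (starSX inv act b))) := by
  obtain ⟨s, x⟩ := a
  obtain ⟨t, y⟩ := b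
  have hinv : inv t * inv (s * t * inv t) = inv (s * t) := by
    rw [hS.inv_mul_rev, hS.inv_inv, hS.inv_mul_rev, ← mul_assoc, ← mul_assoc, hS.inv_mul_inv]
  have hst : s * t * inv t * t = s * t := by
    simp only [mul_assoc]
    rw [← mul_assoc t, hS.mul_inv_mul]
  change (inv (s * t), act (s * t) (act (inv (s * t) * (s * t)) y)) =
    (inv t * inv (s * t * inv t),
      act (inv (inv t * inv (s * t * inv t)) * (inv t * inv (s * t * inv t)))
        (act (s * t * inv t) (act (inv (s * t * inv t) * (s * t * inv t)) (act t y))))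
  rw [hinv, hS.inv_inv, act_act_inv_mul_self hS hA, act_act_inv_mul_self hS hA,
    ← hA.act_mul (s * t * inv t) t, hst, ← hA.act_mul _ (s * t), hS.mul_inv_mul]

omit hS in
theorem mulSX_self_eq_self_iff {a : S × X} (ha : memSX inv p a) :
    mulSX inv act a a = a ↔ IsIdem a.1 := by
  obtain ⟨s, x⟩ := a
  change inv s * s = p x at ha
  refine ⟨fun h => congrArg Prod.fst h, fun hs => ?_⟩
  change (s * s, act (inv (s * s) * (s * s)) x) = (s, x)
  rw [hs, ha, hA.act_p_self]

theorem starSX_of_isIdem_fst {a : S × X} (ha : memSX inv p a) (hs : IsIdem a.1) :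
    starSX inv act a = a := by
  rw [ha.eq_p_of_isIdem_fst hS hs]
  change (inv (p a.2), act (p a.2) a.2) = (p a.2, a.2)
  rw [hS.inv_eq_self_of_isIdem (hA.isIdem_p a.2), hA.act_p_self]

end IsLeftEtaleAction

/-- Proposition 2.5(1): `S∗X` is a well-defined right generalized inverse ∗-semigroup,
whose idempotents are precisely the pairs `(p x, x)`. -/
theorem sx_is_rgis_star {S X : Type*} [Semigroup S]
    (inv : S → S) (hS : IsInverseSemigroup S inv)
    (p : X → S) (act : S → X → X)
    (hp : ∀ x : X, IsIdem (p x))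
    (hassoc : ∀ (s t : S) (x : X), act (s * t) x = act s (act t x))
    (he1 : ∀ x : X, act (p x) x = x)
    (he2 : ∀ (s : S) (x : X), p (act s x) = s * p x * inv s) :
    -- closure of the operations
    (∀ a b : S × X, memSX inv p a → memSX inv p b → memSX inv p (mulSX inv act a b)) ∧
    (∀ a : S × X, memSX inv p a → memSX inv p (starSX inv act a)) ∧
    -- associativity
    (∀ a b c : S × X, memSX inv p a → memSX inv p b → memSX inv p c →
      mulSX inv act (mulSX inv act a b) c = mulSX inv act a (mulSX inv act b c)) ∧
    -- (S1)
    (∀ a : S × X, memSX inv p a → starSX inv act (starSX inv act a) = a) ∧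
    -- (S2): every element is regular with `a∗ ∈ V(a)`
    (∀ a : S × X, memSX inv p a →
      mulSX inv act (mulSX inv act a (starSX inv act a)) a = a ∧
      mulSX inv act (mulSX inv act (starSX inv act a) a) (starSX inv act a) =
        starSX inv act a) ∧
    -- (S3)
    (∀ a b : S × X, memSX inv p a → memSX inv p b →
      starSX inv act (mulSX inv act a b) =
        mulSX inv act (starSX inv act b)
          (starSX inv act (mulSX inv act (mulSX inv act a b) (starSX inv act b)))) ∧
    -- (S4)
    (∀ a : S × X, memSX inv p a → mulSX inv act a a = a → starSX inv act a = a) ∧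
    -- idempotents are precisely the pairs (p x, x)
    (∀ a : S × X, memSX inv p a → (mulSX inv act a a = a ↔ ∃ x : X, a = (p x, x))) ∧
    -- the product of two idempotents is idempotent
    (∀ a b : S × X, memSX inv p a → memSX inv p b →
      mulSX inv act a a = a → mulSX inv act b b = b →
      mulSX inv act (mulSX inv act a b) (mulSX inv act a b) = mulSX inv act a b) ∧
    -- right normality for idempotents
    (∀ a b c : S × X, memSX inv p a → memSX inv p b → memSX inv p c →
      mulSX inv act a a = a → mulSX inv act b b = b → mulSX inv act c c = c →
      mulSX inv act (mulSX inv act a b) c = mulSX inv act (mulSX inv act b a) c) := by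
  have hA : IsLeftEtaleAction inv p act := ⟨hp, hassoc, he1, he2⟩
  have hidem : ∀ {a}, memSX inv p a → (mulSX inv act a a = a ↔ IsIdem a.1) :=
    hA.mulSX_self_eq_self_iff
  refine ⟨fun _ _ _ hb => hA.memSX_mulSX hS hb, fun _ ha => hA.memSX_starSX hS ha,
    fun a b c _ _ _ => hA.mulSX_assoc hS a b c, fun _ ha => hA.starSX_starSX hS ha,
    fun _ ha => ⟨hA.mulSX_mulSX_starSX_self hS ha, hA.mulSX_mulSX_self_starSX hS⟩,
    fun a b _ _ => hA.starSX_mulSX hS a b,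
    fun _ ha h => hA.starSX_of_isIdem_fst hS ha ((hidem ha).1 h), ?_, ?_, ?_⟩
  · intro a ha
    rw [hidem ha]
    refine ⟨fun hs => ⟨a.2, ha.eq_p_of_isIdem_fst hS hs⟩, ?_⟩
    rintro ⟨x, rfl⟩
    exact hA.isIdem_p x
  · intro a b ha hb hia hib
    rw [hidem (hA.memSX_mulSX hS hb)]
    exact hS.isIdem_mul ((hidem ha).1 hia) ((hidem hb).1 hib)
  · intro a b c ha hb _ hia hib _
    simp only [mulSX, hS.mul_comm_of_isIdem ((hidem ha).1 hia) ((hidem hb).1 hib)]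
end

section
/- Let T be a right generalized inverse ∗-semigroup, S an inverse semigroup, θ : T → S an étale homomorphism, e an idempotent of T, and s, t ∈ S. Suppose b ∈ T satisfies b∗·b ≤ e and θ(b) = t·θ(e); suppose a ∈ T satisfies a∗·a ≤ b·b∗ and θ(a) = s·θ(b·b∗); and suppose c ∈ T satisfies c∗·c ≤ e and θ(c) = (s·t)·θ(e), where ≤ denotes the natural partial order on T. Then c = a·b, and consequently c·c∗ = a·a∗. (This is the key computation showing that the prescription s·e = t·t∗, where t∗·t ≤ e and θ(t) = s·θ(e), defines a left étale action of S on the idempotents of T.) -/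
/-! Both `c` and `a·b` lie in `T·e`, and `θ(a·b) = s·θ(b·b∗)·θ(b) = s·θ(b) = s·t·θ(e) = θ(c)`,
so `c = a·b` by injectivity of `θ` on `T·e`. Since `a·b·b∗ = a`, axiom (S3) gives
`(a·b)∗ = b∗·a∗`, whence `c·c∗ = a·(b·b∗)·a∗ = a·a∗`. -/

theorem IsInvOf.isIdem_mul_s18 {S : Type*} [Semigroup S] {x x' : S} (h : IsInvOf x' x) :
    IsIdem (x * x') := by
  show x * x' * (x * x') = x * x'
  rw [← mul_assoc, h.1]

theorem IsInvOf.mul_eq_self_of_natLe {S : Type*} [Semigroup S] {x x' y : S}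
    (h : IsInvOf x' x) (hy : IsIdem y) (hle : NatLe (x' * x) y) : x * y = x := by
  obtain ⟨f, -, -, -, hf, -⟩ := hle
  have hx : x * (x' * x) = x := by rw [← mul_assoc, h.1]
  calc x * y = x * (x' * x) * y := by rw [hx]
    _ = x * (f * (y * y)) := by rw [hf]; simp only [mul_assoc]
    _ = x := by rw [hy, ← hf, hx]

theorem IsRightStar.star_mul_of_mul_mul_star_eq {S : Type*} [Semigroup S] {star : S → S}
    (hstar : IsRightStar S star) {a b : S} (h : a * b * star b = a) :
    star (a * b) = star b * star a := by
  rw [hstar.s3, h]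

theorem etale_action_key_computation_general {T S : Type*} [Semigroup T] [Semigroup S]
    (star : T → T) (hstar : IsRightStar T star)
    (θ : T → S) (hhom : ∀ a b : T, θ (a * b) = θ a * θ b)
    (het : IsEtaleHom θ)
    (e : T) (he : IsIdem e) (s t : S) (a b c : T)
    (hb1 : NatLe (star b * b) e) (hb2 : θ b = t * θ e)
    (ha1 : NatLe (star a * a) (b * star b)) (ha2 : θ a = s * θ (b * star b))
    (hc1 : NatLe (star c * c) e) (hc2 : θ c = (s * t) * θ e) :
    c = a * b ∧ c * star c = a * star a := by
  have hce : c * e = c := (hstar.s2 c).mul_eq_self_of_natLe he hc1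
  have hbe : b * e = b := (hstar.s2 b).mul_eq_self_of_natLe he hb1
  have hab : a * (b * star b) = a :=
    (hstar.s2 a).mul_eq_self_of_natLe (hstar.s2 b).isIdem_mul_s18 ha1
  have hθ : θ c = θ (a * b) := by
    calc θ c = s * (t * θ e) := by rw [hc2, mul_assoc]
      _ = s * θ (b * star b * b) := by rw [← hb2, (hstar.s2 b).1]
      _ = θ (a * b) := by rw [hhom, hhom a, ha2, mul_assoc]
  have hcab : c = a * b := (het e he).1 c (a * b) hce (by rw [mul_assoc, hbe]) hθ
  refine ⟨hcab, ?_⟩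
  rw [hcab, hstar.star_mul_of_mul_mul_star_eq (by rw [mul_assoc, hab])]
  calc a * b * (star b * star a) = a * (b * star b) * star a := by simp only [mul_assoc]
    _ = a * star a := by rw [hab]

/-- Proposition 2.6(1), the key computation: with `b, a, c` as prescribed, `c = a·b` and
hence `c·c∗ = a·a∗`. -/
theorem etale_action_key_computation {T S : Type*} [Semigroup T] [Semigroup S]
    (hT : IsRGIS T) (star : T → T) (hstar : IsRightStar T star)
    (inv : S → S) (hS : IsInverseSemigroup S inv)
    (θ : T → S) (hhom : ∀ a b : T, θ (a * b) = θ a * θ b)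
    (het : IsEtaleHom θ)
    (e : T) (he : IsIdem e) (s t : S) (a b c : T)
    (hb1 : NatLe (star b * b) e) (hb2 : θ b = t * θ e)
    (ha1 : NatLe (star a * a) (b * star b)) (ha2 : θ a = s * θ (b * star b))
    (hc1 : NatLe (star c * c) e) (hc2 : θ c = (s * t) * θ e) :
    c = a * b ∧ c * star c = a * star a :=
  etale_action_key_computation_general star hstar θ hhom het e he s t a b c hb1 hb2 ha1 ha2 hc1 hc2
end
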